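/- Let X be an absolutely continuous random variable with bounded support (0,s), CDF K and survival function K̄ = 1−K, that is symmetric about s/2 in the sense that K(x) = K̄(s−x) for all x ∈ (0,s). Then for every γ>0 and ψ ≥ 0, CPE_γ^ψ(X) = (1/Γ(γ+1)) ∫_0^s ψ(s−x) K̄(x) (−ln K̄(x))^γ dx. In particular, for ψ(x) = x, CPE_γ^ψ(X) = s·CRE_γ(X) − CRE_γ^{ψ(x)=x}(X), where CRE_γ(X) = (1/Γ(γ+1)) ∫_0^s K̄(x)(−ln K̄(x))^γ dx and CRE_γ^{ψ(x)=x}(X) = (1/Γ(γ+1)) ∫_0^s x K̄(x)(−ln K̄(x))^γ dx. -/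

import Mathlib

/-!
The substitution `x ↦ s - x` maps `(0, s)` onto itself and, by the symmetry `K x = 1 - K (s - x)`,
turns `K` into the survival function `1 - K`. For `ψ x = x` one then splits `ψ (s - x) = s - x`,
which is legitimate because `u (-log u) ^ γ ≤ γ ^ γ` on `[0, 1]`, so both integrands are bounded.
-/

open MeasureTheory Set

theorem setIntegral_Ioo_comp_sub_left (F : ℝ → ℝ) (s : ℝ) :
    ∫ x in Ioo 0 s, F (s - x) = ∫ x in Ioo 0 s, F x := by
  rcases le_total 0 s with hs | hs
  · rw [← integral_Ioc_eq_integral_Ioo, ← integral_Ioc_eq_integral_Ioo,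
      ← intervalIntegral.integral_of_le hs, ← intervalIntegral.integral_of_le hs,
      intervalIntegral.integral_comp_sub_left F s, sub_self, sub_zero]
  · simp [Ioo_eq_empty_of_le hs]

theorem setIntegral_Ioo_eq_of_eq_comp_sub_left {F G : ℝ → ℝ} {s : ℝ}
    (h : ∀ x ∈ Ioo 0 s, F x = G (s - x)) :
    ∫ x in Ioo 0 s, F x = ∫ x in Ioo 0 s, G x := by
  rw [setIntegral_congr_fun measurableSet_Ioo h, setIntegral_Ioo_comp_sub_left G s]

theorem rpow_le_rpow_mul_exp {γ t : ℝ} (hγ : 0 < γ) (ht : 0 ≤ t) :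
    t ^ γ ≤ γ ^ γ * Real.exp t := by
  have ht_le : t ≤ γ * Real.exp (t / γ) := by
    calc t = γ * (t / γ) := by field_simp
      _ ≤ γ * Real.exp (t / γ) := by
        gcongr
        linarith [Real.add_one_le_exp (t / γ)]
  calc t ^ γ ≤ (γ * Real.exp (t / γ)) ^ γ := Real.rpow_le_rpow ht ht_le hγ.le
    _ = γ ^ γ * Real.exp t := by
      rw [Real.mul_rpow hγ.le (Real.exp_pos _).le, ← Real.exp_mul, div_mul_cancel₀ _ hγ.ne']

theorem mul_neg_log_rpow_le {γ u : ℝ} (hγ : 0 < γ) (hu0 : 0 ≤ u) (hu1 : u ≤ 1) :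
    u * (-Real.log u) ^ γ ≤ γ ^ γ := by
  rcases hu0.eq_or_lt with rfl | hu
  · simpa using (Real.rpow_pos_of_pos hγ γ).le
  have ht : 0 ≤ -Real.log u := neg_nonneg.mpr (Real.log_nonpos hu0 hu1)
  calc u * (-Real.log u) ^ γ ≤ u * (γ ^ γ * Real.exp (-Real.log u)) :=
        mul_le_mul_of_nonneg_left (rpow_le_rpow_mul_exp hγ ht) hu0
    _ = γ ^ γ := by
      rw [Real.exp_neg, Real.exp_log hu]
      field_simp

theorem integrableOn_mul_neg_log_rpow {f : ℝ → ℝ} {S : Set ℝ} {γ : ℝ} (hγ : 0 < γ)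
    (hf : Measurable f) (hSm : MeasurableSet S) (hS : volume S ≠ ⊤)
    (hf01 : ∀ x ∈ S, f x ∈ Icc 0 1) :
    IntegrableOn (fun x => f x * (-Real.log (f x)) ^ γ) S := by
  refine Measure.integrableOn_of_bounded (M := γ ^ γ) hS ?_ ?_
  · exact (hf.mul ((Real.continuous_rpow_const hγ.le).measurable.comp
      (Real.measurable_log.comp hf).neg)).aestronglyMeasurable
  · filter_upwards [ae_restrict_mem hSm] with x hx
    obtain ⟨h0, h1⟩ := hf01 x hx
    have hlog : 0 ≤ -Real.log (f x) := neg_nonneg.mpr (Real.log_nonpos h0 h1)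
    rw [Real.norm_of_nonneg (mul_nonneg h0 (Real.rpow_nonneg hlog γ))]
    exact mul_neg_log_rpow_le hγ h0 h1

theorem measurable_toReal_measure_Iic (μ : Measure ℝ) :
    Measurable fun x => (μ (Iic x)).toReal :=
  (Monotone.measurable fun _ _ hab => measure_mono (Iic_subset_Iic.mpr hab)).ennreal_toReal

theorem wfgcpe_symmetric_general
    (s : ℝ)
    (μ : Measure ℝ)
    (K : ℝ → ℝ) (hK : ∀ x, K x = (μ (Set.Iic x)).toReal)
    (hsym : ∀ x ∈ Set.Ioo 0 s, K x = 1 - K (s - x))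
    (ψ : ℝ → ℝ)
    (γ : ℝ) (hγ : 0 < γ) :
    ((1 / Real.Gamma (γ + 1)) *
        ∫ x in Set.Ioo 0 s, ψ x * K x * (-Real.log (K x)) ^ γ
      = (1 / Real.Gamma (γ + 1)) *
        ∫ x in Set.Ioo 0 s, ψ (s - x) * (1 - K x) * (-Real.log (1 - K x)) ^ γ)
    ∧
    ((1 / Real.Gamma (γ + 1)) *
        ∫ x in Set.Ioo 0 s, x * K x * (-Real.log (K x)) ^ γ
      = s * ((1 / Real.Gamma (γ + 1)) *
            ∫ x in Set.Ioo 0 s, (1 - K x) * (-Real.log (1 - K x)) ^ γ)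
        - (1 / Real.Gamma (γ + 1)) *
            ∫ x in Set.Ioo 0 s, x * (1 - K x) * (-Real.log (1 - K x)) ^ γ) := by
  have hKm : Measurable K := funext hK ▸ measurable_toReal_measure_Iic μ
  have hKbar : ∀ x ∈ Ioo 0 s, 1 - K x ∈ Icc 0 1 := fun x hx => by
    have := hsym x hx
    constructor <;> linarith [hK x, hK (s - x), (μ (Iic x)).toReal_nonneg,
      (μ (Iic (s - x))).toReal_nonneg]
  have reflect : ∀ φ : ℝ → ℝ, ∫ x in Ioo 0 s, φ x * K x * (-Real.log (K x)) ^ γ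
      = ∫ x in Ioo 0 s, φ (s - x) * (1 - K x) * (-Real.log (1 - K x)) ^ γ :=
    fun φ => setIntegral_Ioo_eq_of_eq_comp_sub_left fun x hx => by
      rw [sub_sub_cancel, ← hsym x hx]
  have hint : IntegrableOn (fun x => (1 - K x) * (-Real.log (1 - K x)) ^ γ) (Ioo 0 s) :=
    integrableOn_mul_neg_log_rpow hγ (measurable_const.sub hKm) measurableSet_Ioo
      measure_Ioo_lt_top.ne hKbar
  have hint_x : IntegrableOn (fun x => x * (1 - K x) * (-Real.log (1 - K x)) ^ γ) (Ioo 0 s) := by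
    simp_rw [mul_assoc]
    exact hint.continuousOn_mul_of_subset continuousOn_id isCompact_Icc measurableSet_Ioo
      Ioo_subset_Icc_self
  refine ⟨by rw [reflect ψ], ?_⟩
  have split : ∫ x in Ioo 0 s, (s - x) * (1 - K x) * (-Real.log (1 - K x)) ^ γ
      = s * (∫ x in Ioo 0 s, (1 - K x) * (-Real.log (1 - K x)) ^ γ)
        - ∫ x in Ioo 0 s, x * (1 - K x) * (-Real.log (1 - K x)) ^ γ := by
    rw [← integral_const_mul, ← integral_sub (hint.const_mul s) hint_x]
    congr 1 with x
    ring
  rw [reflect fun x => x, split]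
  ring

/-- For a symmetric (about `s/2`) absolutely continuous random variable
on `(0,s)`, `CPE_γ^ψ(X) = (1/Γ(γ+1)) ∫_0^s ψ(s−x) K̄(x)(−ln K̄(x))^γ dx`, and in
particular for `ψ(x) = x`,
`CPE_γ^ψ(X) = s·CRE_γ(X) − CRE_γ^{ψ(x)=x}(X)`. -/
theorem wfgcpe_symmetric
    (s : ℝ) (hs : 0 < s)
    (μ : Measure ℝ) [IsProbabilityMeasure μ] (hac : μ ≪ volume)
    (hsupp : μ (Set.Ioo 0 s) = 1)
    (K : ℝ → ℝ) (hK : ∀ x, K x = (μ (Set.Iic x)).toReal)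
    (hsym : ∀ x ∈ Set.Ioo 0 s, K x = 1 - K (s - x))
    (ψ : ℝ → ℝ) (hψ0 : ∀ x, 0 ≤ ψ x)
    (γ : ℝ) (hγ : 0 < γ) :
    ((1 / Real.Gamma (γ + 1)) *
        ∫ x in Set.Ioo 0 s, ψ x * K x * (-Real.log (K x)) ^ γ
      = (1 / Real.Gamma (γ + 1)) *
        ∫ x in Set.Ioo 0 s, ψ (s - x) * (1 - K x) * (-Real.log (1 - K x)) ^ γ)
    ∧
    ((1 / Real.Gamma (γ + 1)) *
        ∫ x in Set.Ioo 0 s, x * K x * (-Real.log (K x)) ^ γ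
      = s * ((1 / Real.Gamma (γ + 1)) *
            ∫ x in Set.Ioo 0 s, (1 - K x) * (-Real.log (1 - K x)) ^ γ)
        - (1 / Real.Gamma (γ + 1)) *
            ∫ x in Set.Ioo 0 s, x * (1 - K x) * (-Real.log (1 - K x)) ^ γ) :=
  wfgcpe_symmetric_general s μ K hK hsym ψ γ hγ
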